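/- arXiv:1806.04898 — 2 statements merged into one kernel-verified Lean document; each statement's English description precedes it below -/
import Mathlib

section
/- If A = Op^{AW}(G) is the anti-Wick quantization of a bounded continuous function G on ℝ^{2n}, then for all X, Y ∈ ℝ^{2n}: |⟨A Ψ_X, Ψ_Y⟩| ≤ ‖G‖_∞ · exp(-|X - Y|²/8). -/
open MeasureTheory Real Complex

noncomputable section

abbrev En (n : ℕ) := EuclideanSpace ℝ (Fin n)

/-- The coherent state `Ψ_{x,ξ}(u) = π^{-n/4} exp(-|u-x|²/2 + i u·ξ - (i/2) x·ξ)`. -/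
def cs (n : ℕ) (X : En n × En n) (u : En n) : ℂ :=
  ((Real.pi ^ (-(n : ℝ) / 4) : ℝ) : ℂ) *
    Complex.exp (-((‖u - X.1‖ ^ 2 : ℝ) : ℂ) / 2 + Complex.I * ((inner ℝ u X.2 : ℝ) : ℂ)
      - Complex.I / 2 * ((inner ℝ X.1 X.2 : ℝ) : ℂ))

/-- The standard symplectic form `σ((x,ξ),(y,η)) = y·ξ - x·η`. -/
def symp (n : ℕ) (X Z : En n × En n) : ℝ :=
  (inner ℝ Z.1 X.2 : ℝ) - (inner ℝ X.1 Z.2 : ℝ)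

/-!
The overlap of two coherent states is a Gaussian in phase space:
`|⟨Ψ_X, Ψ_Z⟩| = exp(-|X - Z|²/4)`, by completing the square around the midpoint of the
positions and taking the Fourier transform of a Gaussian. Bounding `|G|` by `M` under the
integral defining `⟨A Ψ_X, Ψ_Y⟩` leaves the convolution of two such Gaussians, which by
Apollonius' identity `|a - z|² + |z - b|² = 2|z - (a + b)/2|² + |a - b|²/2` equals
`(2π)ⁿ exp(-|X - Y|²/8)`; the factor `(2π)⁻ⁿ` cancels the volume.
-/

section Gaussian

variable {V : Type*} [NormedAddCommGroup V] [InnerProductSpace ℝ V]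

theorem exp_neg_sq_dist_mul_exp_neg_sq_dist (a b z : V) :
    rexp (-‖a - z‖ ^ 2 / 4) * rexp (-‖z - b‖ ^ 2 / 4) =
      rexp (-‖a - b‖ ^ 2 / 8) * rexp (-2⁻¹ * ‖z - midpoint ℝ a b‖ ^ 2) := by
  have h := EuclideanGeometry.dist_sq_add_dist_sq_eq_two_mul_dist_midpoint_sq_add_half_dist_sq z a b
  simp only [dist_eq_norm] at h
  rw [← Real.exp_add, ← Real.exp_add, norm_sub_rev a z]
  congr 1
  linear_combination (-1/4 : ℝ) * h

variable [FiniteDimensional ℝ V] [MeasurableSpace V] [BorelSpace V]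

theorem integral_exp_neg_half_sq_dist (c : V) :
    ∫ z : V, rexp (-2⁻¹ * ‖z - c‖ ^ 2) = (2 * π) ^ (Module.finrank ℝ V / 2 : ℝ) := by
  rw [integral_sub_right_eq_self (fun z : V => rexp (-2⁻¹ * ‖z‖ ^ 2)) c,
    GaussianFourier.integral_rexp_neg_mul_sq_norm (by norm_num), div_inv_eq_mul, mul_comm]

theorem integrable_exp_neg_sq_dist_mul_exp_neg_sq_dist (a b : V) :
    Integrable fun z : V => rexp (-‖a - z‖ ^ 2 / 4) * rexp (-‖z - b‖ ^ 2 / 4) := by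
  simp_rw [exp_neg_sq_dist_mul_exp_neg_sq_dist a b]
  refine (Integrable.of_integral_ne_zero ?_).const_mul _
  rw [integral_exp_neg_half_sq_dist]
  positivity

theorem integral_exp_neg_sq_dist_mul_exp_neg_sq_dist (a b : V) :
    ∫ z : V, rexp (-‖a - z‖ ^ 2 / 4) * rexp (-‖z - b‖ ^ 2 / 4) =
      (2 * π) ^ (Module.finrank ℝ V / 2 : ℝ) * rexp (-‖a - b‖ ^ 2 / 8) := by
  simp_rw [exp_neg_sq_dist_mul_exp_neg_sq_dist a b]
  rw [integral_const_mul, integral_exp_neg_half_sq_dist, mul_comm]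

theorem norm_integral_cexp_neg_sq_norm_add_I_inner (w : V) :
    ‖∫ v : V, cexp (-‖v‖ ^ 2 + I * inner ℝ w v)‖ =
      π ^ (Module.finrank ℝ V / 2 : ℝ) * rexp (-‖w‖ ^ 2 / 4) := by
  have h := GaussianFourier.integral_cexp_neg_mul_sq_norm_add (V := V)
    (by norm_num : (0 : ℝ) < (1 : ℂ).re) I w
  simp only [neg_one_mul, div_one, mul_one, I_sq] at h
  rw [h, norm_mul, ← ofReal_natCast, ← ofReal_ofNat, ← ofReal_div,
    norm_cpow_eq_rpow_re_of_pos pi_pos, ofReal_re, norm_exp]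
  congr 2
  simp [← ofReal_pow]

variable {W : Type*} [NormedAddCommGroup W] [InnerProductSpace ℝ W] [FiniteDimensional ℝ W]
  [MeasurableSpace W] [BorelSpace W]

theorem integrable_exp_neg_sq_dist_mul_exp_neg_sq_dist_prod (a b : V × W) :
    Integrable fun z : V × W => (rexp (-‖a.1 - z.1‖ ^ 2 / 4) * rexp (-‖z.1 - b.1‖ ^ 2 / 4)) *
      (rexp (-‖a.2 - z.2‖ ^ 2 / 4) * rexp (-‖z.2 - b.2‖ ^ 2 / 4)) := by
  rw [Measure.volume_eq_prod]
  exact (integrable_exp_neg_sq_dist_mul_exp_neg_sq_dist a.1 b.1).mul_prod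
    (integrable_exp_neg_sq_dist_mul_exp_neg_sq_dist a.2 b.2)

theorem integral_exp_neg_sq_dist_mul_exp_neg_sq_dist_prod (a b : V × W) :
    ∫ z : V × W, (rexp (-‖a.1 - z.1‖ ^ 2 / 4) * rexp (-‖z.1 - b.1‖ ^ 2 / 4)) *
      (rexp (-‖a.2 - z.2‖ ^ 2 / 4) * rexp (-‖z.2 - b.2‖ ^ 2 / 4)) =
      (2 * π) ^ ((Module.finrank ℝ V + Module.finrank ℝ W) / 2 : ℝ) *
        rexp (-(‖a.1 - b.1‖ ^ 2 + ‖a.2 - b.2‖ ^ 2) / 8) := by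
  rw [Measure.volume_eq_prod, integral_prod_mul
    (f := fun z : V => rexp (-‖a.1 - z‖ ^ 2 / 4) * rexp (-‖z - b.1‖ ^ 2 / 4))
    (g := fun z : W => rexp (-‖a.2 - z‖ ^ 2 / 4) * rexp (-‖z - b.2‖ ^ 2 / 4)),
    integral_exp_neg_sq_dist_mul_exp_neg_sq_dist, integral_exp_neg_sq_dist_mul_exp_neg_sq_dist,
    add_div, rpow_add (by positivity),
    show -(‖a.1 - b.1‖ ^ 2 + ‖a.2 - b.2‖ ^ 2) / 8 = -‖a.1 - b.1‖ ^ 2 / 8 + -‖a.2 - b.2‖ ^ 2 / 8 by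
      ring, Real.exp_add]
  ring

end Gaussian

theorem inner_toLp_eq_integral {α 𝕜 : Type*} [RCLike 𝕜] [MeasurableSpace α] {μ : Measure α}
    {f g : α → 𝕜} (hf : MemLp f 2 μ) (hg : MemLp g 2 μ) :
    inner 𝕜 (hf.toLp f) (hg.toLp g) = ∫ a, starRingEnd 𝕜 (f a) * g a ∂μ := by
  rw [L2.inner_def]
  refine integral_congr_ae ?_
  filter_upwards [hf.coeFn_toLp, hg.coeFn_toLp] with a hfa hga
  rw [hfa, hga, RCLike.inner_apply, mul_comm]

theorem conj_cs_mul_cs_add_midpoint {n : ℕ} (Z X : En n × En n) : ∃ θ : ℝ, ∀ v : En n,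
    starRingEnd ℂ (cs n Z (v + midpoint ℝ Z.1 X.1)) * cs n X (v + midpoint ℝ Z.1 X.1) =
      ((π ^ (-(n : ℝ) / 2) * rexp (-‖X.1 - Z.1‖ ^ 2 / 4) : ℝ) : ℂ) * cexp (θ * I) *
        cexp (-‖v‖ ^ 2 + I * inner ℝ (X.2 - Z.2) v) := by
  set m := midpoint ℝ Z.1 X.1 with hm
  refine ⟨inner ℝ m (X.2 - Z.2) + (inner ℝ Z.1 Z.2 - inner ℝ X.1 X.2) / 2, fun v => ?_⟩
  have hsq : ‖v + m - Z.1‖ ^ 2 + ‖v + m - X.1‖ ^ 2 = 2 * ‖v‖ ^ 2 + ‖X.1 - Z.1‖ ^ 2 / 2 := by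
    have h := EuclideanGeometry.dist_sq_add_dist_sq_eq_two_mul_dist_midpoint_sq_add_half_dist_sq
      (v + m) Z.1 X.1
    rw [← hm] at h
    simp only [dist_eq_norm, add_sub_cancel_right, norm_sub_rev Z.1] at h
    linear_combination h
  have hinner : inner ℝ (v + m) X.2 - inner ℝ (v + m) Z.2 =
      inner ℝ (X.2 - Z.2) v + inner ℝ m (X.2 - Z.2) := by
    simp only [inner_sub_right, inner_add_left, real_inner_comm v]
    ring
  have hpi : ((π ^ (-(n : ℝ) / 4) : ℝ) : ℂ) * ((π ^ (-(n : ℝ) / 4) : ℝ) : ℂ) =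
      ((π ^ (-(n : ℝ) / 2) : ℝ) : ℂ) := by
    rw [← ofReal_mul, ← rpow_add pi_pos]
    ring_nf
  simp only [cs, map_mul, ← exp_conj, conj_ofReal, map_sub, map_add, map_neg, map_div₀,
    map_ofNat, conj_I]
  rw [mul_mul_mul_comm, hpi, ofReal_mul, ofReal_exp, mul_assoc, mul_assoc, ← Complex.exp_add,
    ← Complex.exp_add, ← Complex.exp_add]
  congr 2
  have hsqC := congrArg ofReal hsq
  have hinnerC := congrArg ofReal hinner
  push_cast at hsqC hinnerC ⊢
  linear_combination (-1 / 2 : ℂ) * hsqC + I * hinnerC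

theorem norm_inner_cs {n : ℕ} (Z X : En n × En n)
    (hZ : MemLp (cs n Z) 2 (volume : Measure (En n)))
    (hX : MemLp (cs n X) 2 (volume : Measure (En n))) :
    ‖inner ℂ (hZ.toLp (cs n Z)) (hX.toLp (cs n X))‖ =
      rexp (-‖X.1 - Z.1‖ ^ 2 / 4) * rexp (-‖X.2 - Z.2‖ ^ 2 / 4) := by
  obtain ⟨θ, hprod⟩ := conj_cs_mul_cs_add_midpoint Z X
  rw [inner_toLp_eq_integral, ← integral_add_right_eq_self _ (midpoint ℝ Z.1 X.1)]
  simp only [hprod, integral_const_mul, norm_mul, norm_real, norm_exp_ofReal_mul_I,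
    norm_integral_cexp_neg_sq_norm_add_I_inner, finrank_euclideanSpace_fin]
  have hpi : π ^ (-(n : ℝ) / 2) * π ^ ((n : ℝ) / 2) = 1 := by
    rw [← rpow_add pi_pos, neg_div, neg_add_cancel, rpow_zero]
  rw [Real.norm_of_nonneg (by positivity), Real.norm_of_nonneg (by positivity)]
  linear_combination (rexp (-‖X.1 - Z.1‖ ^ 2 / 4) * rexp (-‖X.2 - Z.2‖ ^ 2 / 4)) * hpi

theorem antiWick_decay_general (n : ℕ) (G : En n × En n → ℂ) (M : ℝ)
    (hGb : ∀ Z, ‖G Z‖ ≤ M)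
    (hcs : ∀ X : En n × En n, MemLp (cs n X) 2 (volume : Measure (En n)))
    (A : Lp ℂ 2 (volume : Measure (En n)) →L[ℂ] Lp ℂ 2 (volume : Measure (En n)))
    -- `A = Op^{AW}(G)` : for all `f, g ∈ L²`, `⟨A f, g⟩ = (2π)^{-n} ∫ G(Z) ⟨f,Ψ_Z⟩⟨Ψ_Z,g⟩ dZ`
    (hA : ∀ f g : Lp ℂ 2 (volume : Measure (En n)),
      (inner ℂ g (A f) : ℂ) = ((((2 * Real.pi) ^ n)⁻¹ : ℝ) : ℂ) *
        ∫ Z : En n × En n, G Z * (inner ℂ ((hcs Z).toLp (cs n Z)) f : ℂ) *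
          (inner ℂ g ((hcs Z).toLp (cs n Z)) : ℂ))
    (X Y : En n × En n) :
    ‖(inner ℂ ((hcs Y).toLp (cs n Y)) (A ((hcs X).toLp (cs n X))) : ℂ)‖ ≤
      M * Real.exp (-(‖X.1 - Y.1‖ ^ 2 + ‖X.2 - Y.2‖ ^ 2) / 8) := by
  set F : En n × En n → ℝ := fun Z =>
    (rexp (-‖X.1 - Z.1‖ ^ 2 / 4) * rexp (-‖Z.1 - Y.1‖ ^ 2 / 4)) *
      (rexp (-‖X.2 - Z.2‖ ^ 2 / 4) * rexp (-‖Z.2 - Y.2‖ ^ 2 / 4)) with hF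
  have hbound : ∀ Z, ‖G Z * inner ℂ ((hcs Z).toLp (cs n Z)) ((hcs X).toLp (cs n X)) *
      inner ℂ ((hcs Y).toLp (cs n Y)) ((hcs Z).toLp (cs n Z))‖ ≤ M * F Z := by
    intro Z
    rw [norm_mul, norm_mul, norm_inner_cs, norm_inner_cs]
    calc _ = ‖G Z‖ * F Z := by ring
      _ ≤ M * F Z := by gcongr; exact hGb Z
  have hF_int : ∫ Z, F Z = (2 * π) ^ n * rexp (-(‖X.1 - Y.1‖ ^ 2 + ‖X.2 - Y.2‖ ^ 2) / 8) := by
    rw [hF, integral_exp_neg_sq_dist_mul_exp_neg_sq_dist_prod, finrank_euclideanSpace_fin,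
      ← two_mul, mul_div_cancel_left₀ _ two_ne_zero, rpow_natCast]
  rw [hA, norm_mul]
  calc _ ≤ ‖((((2 * π) ^ n)⁻¹ : ℝ) : ℂ)‖ * ∫ Z, M * F Z := by
        gcongr
        exact norm_integral_le_of_norm_le
          ((integrable_exp_neg_sq_dist_mul_exp_neg_sq_dist_prod X Y).const_mul M)
          (ae_of_all _ hbound)
    _ = M * rexp (-(‖X.1 - Y.1‖ ^ 2 + ‖X.2 - Y.2‖ ^ 2) / 8) := by
        rw [integral_const_mul, hF_int, norm_real, Real.norm_of_nonneg (by positivity)]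
        field_simp

theorem antiWick_decay (n : ℕ) (G : En n × En n → ℂ) (M : ℝ)
    (hGc : Continuous G) (hGb : ∀ Z, ‖G Z‖ ≤ M)
    (hcs : ∀ X : En n × En n, MemLp (cs n X) 2 (volume : Measure (En n)))
    (A : Lp ℂ 2 (volume : Measure (En n)) →L[ℂ] Lp ℂ 2 (volume : Measure (En n)))
    -- `A = Op^{AW}(G)` : for all `f, g ∈ L²`, `⟨A f, g⟩ = (2π)^{-n} ∫ G(Z) ⟨f,Ψ_Z⟩⟨Ψ_Z,g⟩ dZ`
    (hA : ∀ f g : Lp ℂ 2 (volume : Measure (En n)),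
      (inner ℂ g (A f) : ℂ) = ((((2 * Real.pi) ^ n)⁻¹ : ℝ) : ℂ) *
        ∫ Z : En n × En n, G Z * (inner ℂ ((hcs Z).toLp (cs n Z)) f : ℂ) *
          (inner ℂ g ((hcs Z).toLp (cs n Z)) : ℂ))
    (X Y : En n × En n) :
    ‖(inner ℂ ((hcs Y).toLp (cs n Y)) (A ((hcs X).toLp (cs n X))) : ℂ)‖ ≤
      M * Real.exp (-(‖X.1 - Y.1‖ ^ 2 + ‖X.2 - Y.2‖ ^ 2) / 8) :=
  antiWick_decay_general n G M hGb hcs A hA X Y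
end
end

section
/- Let A be a bounded operator on L²(ℝⁿ). For all X, Z ∈ ℝ^{2n}: ⟨A Ψ_{X+Z}, Ψ_{X-Z}⟩ / ⟨Ψ_{X+Z}, Ψ_{X-Z}⟩ = ⟨e^{-Φ_S(Z)} A e^{Φ_S(Z)} Ψ_X, Ψ_X⟩, where e^{±Φ_S(Z)} acts on coherent states via e^{Φ_S(Z)}Ψ_X = exp(½|Z|² + Z·X - (i/2)σ(Z,X)) Ψ_{X+Z}. -/
open MeasureTheory Real Complex

noncomputable section

/-- The scalar factor in the action `e^{Φ_S(Z)} Ψ_X = expCoef Z X • Ψ_{X+Z}`. -/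
def expCoef (n : ℕ) (Z X : En n × En n) : ℂ :=
  Complex.exp (((‖Z.1‖ ^ 2 + ‖Z.2‖ ^ 2 : ℝ) : ℂ) / 2
    + (((inner ℝ Z.1 X.1 : ℝ) + (inner ℝ Z.2 X.2 : ℝ) : ℝ) : ℂ)
    - Complex.I / 2 * ((symp n Z X : ℝ) : ℂ))

/-! Both sides are sesquilinear in the coherent states, so the identity is a scalar one:
`conj (expCoef (-Z) X) * expCoef Z X = exp (|Z|² + iσ(X,Z))` is the reciprocal of the overlap
`⟨Ψ_{X-Z}, Ψ_{X+Z}⟩`, which is a shifted Gaussian integral. -/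

theorem MeasureTheory.MemLp.inner_toLp_toLp {α E 𝕜 : Type*} [RCLike 𝕜] [NormedAddCommGroup E]
    [InnerProductSpace 𝕜 E] {m : MeasurableSpace α} {μ : Measure α} {f g : α → E}
    (hf : MemLp f 2 μ) (hg : MemLp g 2 μ) :
    inner 𝕜 (hf.toLp f) (hg.toLp g) = ∫ a, inner 𝕜 (f a) (g a) ∂μ := by
  rw [L2.inner_def]
  refine integral_congr_ae ?_
  filter_upwards [hf.coeFn_toLp, hg.coeFn_toLp] with a hfa hga
  rw [hfa, hga]

theorem inner_div_inner_eq_inner_smul_smul {𝕜 E : Type*} [RCLike 𝕜] [SeminormedAddCommGroup E]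
    [InnerProductSpace 𝕜 E] (A : E →ₗ[𝕜] E) {u v : E} {a b : 𝕜}
    (h : (starRingEnd 𝕜) a * b * inner 𝕜 u v = 1) :
    inner 𝕜 u (A v) / inner 𝕜 u v = inner 𝕜 (a • u) (A (b • v)) := by
  have huv : inner 𝕜 u v ≠ 0 := right_ne_zero_of_mul_eq_one h
  rw [map_smul, inner_smul_left, inner_smul_right, div_eq_iff huv]
  linear_combination (-inner 𝕜 u (A v)) * h

theorem integral_cexp_neg_norm_sub_sq_add_inner {V : Type*} [NormedAddCommGroup V]
    [InnerProductSpace ℝ V] [FiniteDimensional ℝ V] [MeasurableSpace V] [BorelSpace V]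
    (x η : V) :
    ∫ u : V, Complex.exp (-(‖u - x‖ ^ 2 : ℂ) + 2 * I * (inner ℝ η (u - x) : ℝ))
      = (π ^ ((Module.finrank ℝ V : ℝ) / 2) : ℝ) * Complex.exp (-(‖η‖ ^ 2 : ℂ)) := by
  rw [integral_sub_right_eq_self
      (fun v : V => Complex.exp (-(‖v‖ ^ 2 : ℂ) + 2 * I * (inner ℝ η v : ℝ))) x]
  have hgauss := GaussianFourier.integral_cexp_neg_mul_sq_norm_add (V := V) (b := 1) (by simp) (2 * I) η
  simp only [neg_one_mul, div_one] at hgauss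
  rw [hgauss, ofReal_cpow pi_pos.le]
  push_cast
  congr 2
  linear_combination ((‖η‖ : ℂ) ^ 2) * I_sq

theorem conj_cs_sub_mul_cs_add (n : ℕ) (X Z : En n × En n) (u : En n) :
    (starRingEnd ℂ) (cs n (X - Z) u) * cs n (X + Z) u
      = (π ^ (-(n : ℝ) / 2) : ℝ) * Complex.exp (-(‖Z.1‖ ^ 2 : ℂ) - I * symp n X Z)
        * Complex.exp (-(‖u - X.1‖ ^ 2 : ℂ) + 2 * I * (inner ℝ Z.2 (u - X.1) : ℝ)) := by
  have hprefactor : (π ^ (-(n : ℝ) / 4) : ℝ) * (π ^ (-(n : ℝ) / 4) : ℝ) = π ^ (-(n : ℝ) / 2) := by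
    rw [← rpow_add pi_pos]; ring_nf
  have hplus : ‖u - (X.1 - Z.1)‖ ^ 2 = ‖u - X.1‖ ^ 2 + 2 * inner ℝ (u - X.1) Z.1 + ‖Z.1‖ ^ 2 := by
    rw [← norm_add_sq_real]; congr 2; abel
  have hminus : ‖u - (X.1 + Z.1)‖ ^ 2 = ‖u - X.1‖ ^ 2 - 2 * inner ℝ (u - X.1) Z.1 + ‖Z.1‖ ^ 2 := by
    rw [← norm_sub_sq_real]; congr 2; abel
  simp only [cs, map_mul, conj_ofReal, ← exp_conj]
  rw [mul_mul_mul_comm, ← Complex.exp_add, ← ofReal_mul, hprefactor, mul_assoc, ← Complex.exp_add]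
  congr 2
  simp only [symp, map_add, map_sub, map_mul, map_div₀, map_neg, map_ofNat, conj_ofReal, conj_I,
    Prod.fst_sub, Prod.fst_add, Prod.snd_sub, Prod.snd_add, hplus, hminus,
    inner_sub_left, inner_sub_right, inner_add_left, inner_add_right, real_inner_comm Z.2]
  push_cast
  ring

theorem integral_conj_cs_sub_mul_cs_add (n : ℕ) (X Z : En n × En n) :
    ∫ u, (starRingEnd ℂ) (cs n (X - Z) u) * cs n (X + Z) u
      = Complex.exp (-((‖Z.1‖ ^ 2 + ‖Z.2‖ ^ 2 : ℝ) + I * symp n X Z)) := by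
  simp_rw [conj_cs_sub_mul_cs_add]
  rw [integral_const_mul, integral_cexp_neg_norm_sub_sq_add_inner, finrank_euclideanSpace_fin,
    mul_mul_mul_comm, ← ofReal_mul, ← rpow_add pi_pos, neg_div, neg_add_cancel, rpow_zero,
    ofReal_one, one_mul, ← Complex.exp_add]
  push_cast
  ring_nf

theorem conj_expCoef_neg_mul_expCoef (n : ℕ) (X Z : En n × En n) :
    (starRingEnd ℂ) (expCoef n (-Z) X) * expCoef n Z X
      = Complex.exp (((‖Z.1‖ ^ 2 + ‖Z.2‖ ^ 2 : ℝ) : ℂ) + I * symp n X Z) := by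
  simp only [expCoef, ← exp_conj, ← Complex.exp_add]
  congr 1
  simp only [symp, map_add, map_sub, map_mul, map_div₀, map_ofNat, conj_ofReal, conj_I,
    Prod.fst_neg, Prod.snd_neg, inner_neg_left, inner_neg_right, norm_neg]
  push_cast
  ring

/-- `⟨AΨ_{X+Z},Ψ_{X-Z}⟩ / ⟨Ψ_{X+Z},Ψ_{X-Z}⟩ = ⟨A e^{Φ_S(Z)}Ψ_X, e^{-Φ_S(Z)}Ψ_X⟩`,
where `e^{±Φ_S(Z)}` acts on coherent states by `e^{Φ_S(Z)}Ψ_X = expCoef Z X • Ψ_{X+Z}`. -/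
theorem conjugated_matrix_element (n : ℕ)
    (hcs : ∀ X : En n × En n, MemLp (cs n X) 2 (volume : Measure (En n)))
    (A : Lp ℂ 2 (volume : Measure (En n)) →L[ℂ] Lp ℂ 2 (volume : Measure (En n)))
    (X Z : En n × En n) :
    (inner ℂ ((hcs (X - Z)).toLp (cs n (X - Z))) (A ((hcs (X + Z)).toLp (cs n (X + Z)))) : ℂ) /
        (inner ℂ ((hcs (X - Z)).toLp (cs n (X - Z))) ((hcs (X + Z)).toLp (cs n (X + Z))) : ℂ) =
      (inner ℂ (expCoef n (-Z) X • (hcs (X - Z)).toLp (cs n (X - Z)))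
        (A (expCoef n Z X • (hcs (X + Z)).toLp (cs n (X + Z)))) : ℂ) := by
  have hoverlap : inner ℂ ((hcs (X - Z)).toLp (cs n (X - Z))) ((hcs (X + Z)).toLp (cs n (X + Z)))
      = Complex.exp (-((‖Z.1‖ ^ 2 + ‖Z.2‖ ^ 2 : ℝ) + I * symp n X Z)) := by
    simp only [MemLp.inner_toLp_toLp, RCLike.inner_apply', integral_conj_cs_sub_mul_cs_add]
  refine inner_div_inner_eq_inner_smul_smul A.toLinearMap ?_
  rw [conj_expCoef_neg_mul_expCoef, hoverlap, ← Complex.exp_add, add_neg_cancel, Complex.exp_zero]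
end
end
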